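/- For all constants a ≥ 0, b ≥ 0, c ≥ 0, the function t ↦ (e^{a/t} − 1)·(e^{b/t} − 1)·e^{c/t} is convex on (0, ∞). -/

import Mathlib

/-!
With `s = 1/t` the function is `g (1/t)`, where `g s = (e^{as} - 1)(e^{bs} - 1) e^{cs}`.
Each factor of `g` is convex, nondecreasing and nonnegative on `(0, ∞)`, and the product of two
such functions is again of this kind: two nondecreasing functions monovary, and the product of
nonnegative monovarying convex functions is convex. Finally, a convex nondecreasing function
composed with the convex map `t ↦ 1/t` is convex.
-/

open Set Real

section LinearOrderedField

variable {𝕜 : Type*} [Field 𝕜] [LinearOrder 𝕜] [IsStrictOrderedRing 𝕜]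

structure ConvexMonotoneNonnegOn (s : Set 𝕜) (f : 𝕜 → 𝕜) : Prop where
  convexOn : ConvexOn 𝕜 s f
  monotoneOn : MonotoneOn f s
  nonneg : ∀ x ∈ s, 0 ≤ f x

theorem ConvexMonotoneNonnegOn.mul {s : Set 𝕜} {f g : 𝕜 → 𝕜} (hf : ConvexMonotoneNonnegOn s f)
    (hg : ConvexMonotoneNonnegOn s g) : ConvexMonotoneNonnegOn s (f * g) where
  convexOn :=
    hf.convexOn.mul hg.convexOn hf.nonneg hg.nonneg (hf.monotoneOn.monovaryOn hg.monotoneOn)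
  monotoneOn := hf.monotoneOn.mul hg.monotoneOn hf.nonneg hg.nonneg
  nonneg x hx := mul_nonneg (hf.nonneg x hx) (hg.nonneg x hx)

theorem image_inv_Ioi_zero : (·⁻¹) '' Ioi (0 : 𝕜) = Ioi 0 := by
  ext
  simp

theorem ConvexOn.comp_inv {g : 𝕜 → 𝕜} (hg : ConvexOn 𝕜 (Ioi 0) g)
    (hgm : MonotoneOn g (Ioi 0)) : ConvexOn 𝕜 (Ioi 0) fun t ↦ g t⁻¹ := by
  rw [← image_inv_Ioi_zero] at hg hgm
  have hinv : ConvexOn 𝕜 (Ioi 0) fun t : 𝕜 ↦ t⁻¹ := by simpa using convexOn_zpow (𝕜 := 𝕜) (-1)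
  exact hg.comp hinv hgm

end LinearOrderedField

theorem convexOn_exp_mul (k : ℝ) : ConvexOn ℝ univ fun s ↦ exp (k * s) :=
  convexOn_exp.comp_linearMap (LinearMap.mulLeft ℝ k)

theorem convexMonotoneNonnegOn_exp_mul {k : ℝ} (hk : 0 ≤ k) :
    ConvexMonotoneNonnegOn (Ioi 0) fun s ↦ exp (k * s) where
  convexOn := (convexOn_exp_mul k).subset (subset_univ _) (convex_Ioi 0)
  monotoneOn _ _ _ _ hxy := exp_le_exp.2 (mul_le_mul_of_nonneg_left hxy hk)
  nonneg _ _ := (exp_pos _).le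

theorem convexMonotoneNonnegOn_exp_mul_sub_one {k : ℝ} (hk : 0 ≤ k) :
    ConvexMonotoneNonnegOn (Ioi 0) fun s ↦ exp (k * s) - 1 where
  convexOn := (convexOn_exp_mul k).subset (subset_univ _) (convex_Ioi 0) |>.sub
    (concaveOn_const 1 (convex_Ioi 0))
  monotoneOn _ hx _ hy hxy := by
    simpa using (convexMonotoneNonnegOn_exp_mul hk).monotoneOn hx hy hxy
  nonneg _ hx := sub_nonneg.2 (one_le_exp (mul_nonneg hk hx.le))

/-- For all constants `a ≥ 0`, `b ≥ 0`, `c ≥ 0`, the function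
`t ↦ (e^{a/t} − 1)·(e^{b/t} − 1)·e^{c/t}` is convex on `(0, ∞)`. -/
theorem stmt_18 (a b c : ℝ) (ha : 0 ≤ a) (hb : 0 ≤ b) (hc : 0 ≤ c) :
    ConvexOn ℝ (Set.Ioi (0 : ℝ))
      (fun t : ℝ => (Real.exp (a / t) - 1) * (Real.exp (b / t) - 1) * Real.exp (c / t)) := by
  have hg := ((convexMonotoneNonnegOn_exp_mul_sub_one ha).mul
    (convexMonotoneNonnegOn_exp_mul_sub_one hb)).mul (convexMonotoneNonnegOn_exp_mul hc)
  simpa only [Pi.mul_apply, div_eq_mul_inv] using hg.convexOn.comp_inv hg.monotoneOn
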